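/- arXiv:0910.1173 — 3 statements merged into one kernel-verified Lean document; each statement's English description precedes it below -/
import Mathlib

section
/- Let n ≥ 1 and let P_0, P_1, …, P_n be points of ℝ². Let γ : [0,1] → ℝ² be the piecewise-linear path that traverses the segments [P_0,P_1], [P_1,P_2], …, [P_{n−1},P_n] in order (affinely on each of n consecutive subintervals of equal length), and assume γ is injective. Let Γ = γ([0,1]) and let ℓ(Γ) = Σ_{i=0}^{n−1} dist(P_i, P_{i+1}). Then the function (ρ,θ) ↦ card(Γ ∩ L(ρ,θ)) (with the convention that an infinite intersection is counted as 0) is integrable on ℝ × [0,π) with respect to Lebesgue measure dρ dθ, and ∫_{θ∈[0,π)} ∫_{ρ∈ℝ} card(Γ ∩ L(ρ,θ)) dρ dθ = 2 ℓ(Γ). -/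
/-!
Off the null set of parameters whose line passes through a vertex, `Γ ∩ L(ρ,θ)` is the disjoint
union of its intersections with the edges (by injectivity two edges meet at most in a common
vertex), and the edge `[A,B]` meets `L(ρ,θ)` in exactly one point when `ρ` lies between the
coordinates of `A` and `B` along the direction `θ`, and nowhere otherwise. Integrating over `ρ`
gives `|⟨B - A, (cos θ, sin θ)⟩|`, and the integral of this over `θ ∈ [0,π)` is `2 ‖B - A‖`.
-/

noncomputable section
open MeasureTheory Real Set
open scoped ENNReal

/-- The line `L(ρ,θ) = {(x,y) : x cos θ + y sin θ = ρ}` in the Euclidean plane. -/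
def paramLine (ρ θ : ℝ) : Set (EuclideanSpace ℝ (Fin 2)) :=
  {q : EuclideanSpace ℝ (Fin 2) | q 0 * Real.cos θ + q 1 * Real.sin θ = ρ}

theorem integral_abs_sin_add (φ : ℝ) : ∫ θ in (0 : ℝ)..π, |sin (θ + φ)| = 2 := by
  have hper : Function.Periodic (fun x => |sin x|) π := fun x => by simp [sin_add_pi]
  rw [intervalIntegral.integral_comp_add_right (fun x => |sin x|), zero_add,
    add_comm π φ, hper.intervalIntegral_add_eq φ 0, zero_add,
    intervalIntegral.integral_congr fun x hx => abs_of_nonneg (sin_nonneg_of_mem_Icc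
      (by rwa [uIcc_of_le pi_pos.le] at hx)), integral_sin, cos_zero, cos_pi]
  norm_num

theorem integral_abs_mul_cos_add_mul_sin (a b : ℝ) :
    ∫ θ in (0 : ℝ)..π, |a * cos θ + b * sin θ| = 2 * √(a ^ 2 + b ^ 2) := by
  set z : ℂ := ⟨b, a⟩
  have hz : ‖z‖ = √(a ^ 2 + b ^ 2) := by
    rw [Complex.norm_def, Complex.normSq_mk]; ring_nf
  have hpolar : ∀ θ, a * cos θ + b * sin θ = ‖z‖ * sin (θ + z.arg) := fun θ => by
    have hc : ‖z‖ * cos z.arg = b := Complex.norm_mul_cos_arg z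
    have hs : ‖z‖ * sin z.arg = a := Complex.norm_mul_sin_arg z
    rw [sin_add, ← hc, ← hs]
    ring
  simp_rw [hpolar, abs_mul, abs_norm, intervalIntegral.integral_const_mul,
    integral_abs_sin_add, hz, mul_comm]

def lineCoord (θ : ℝ) : EuclideanSpace ℝ (Fin 2) →ₗ[ℝ] ℝ where
  toFun q := q 0 * cos θ + q 1 * sin θ
  map_add' p q := by simp only [PiLp.add_apply]; ring
  map_smul' c q := by simp only [PiLp.smul_apply, smul_eq_mul, RingHom.id_apply]; ring

theorem lineCoord_apply (θ : ℝ) (q : EuclideanSpace ℝ (Fin 2)) :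
    lineCoord θ q = q 0 * cos θ + q 1 * sin θ := rfl

theorem paramLine_eq_preimage (ρ θ : ℝ) : paramLine ρ θ = lineCoord θ ⁻¹' {ρ} := rfl

theorem continuous_lineCoord_apply (q : EuclideanSpace ℝ (Fin 2)) :
    Continuous fun θ => lineCoord θ q := by
  simp only [lineCoord_apply]; fun_prop

theorem integral_abs_lineCoord_sub (A B : EuclideanSpace ℝ (Fin 2)) :
    ∫ θ in Ico 0 π, |lineCoord θ B - lineCoord θ A| = 2 * dist A B := by
  rw [integral_Ico_eq_integral_Ioo, ← integral_Ioc_eq_integral_Ioo,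
    ← intervalIntegral.integral_of_le pi_pos.le]
  simp_rw [← map_sub, lineCoord_apply, integral_abs_mul_cos_add_mul_sin, EuclideanSpace.dist_eq,
    Fin.sum_univ_two, Real.dist_eq, sq_abs, PiLp.sub_apply, sub_sq']
  ring_nf

section Band

variable {β : Type*} [MeasurableSpace β] {μ : Measure β} [SFinite μ]

theorem prod_volume_setOf_fst_eq_eq_zero {g : β → ℝ} (hg : Measurable g) :
    (volume.prod μ) {p : ℝ × β | p.1 = g p.2} = 0 := by
  have hmeas : MeasurableSet {p : ℝ × β | p.1 = g p.2} :=
    measurableSet_eq_fun measurable_fst (hg.comp measurable_snd)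
  rw [Measure.prod_apply_symm hmeas]
  simp

variable {a b : β → ℝ} (ha : Measurable a) (hb : Measurable b)
include ha hb

theorem measurableSet_setOf_fst_mem_uIcc :
    MeasurableSet {p : ℝ × β | p.1 ∈ uIcc (a p.2) (b p.2)} := by
  simp only [uIcc, mem_Icc, ofPred_and]
  exact (measurableSet_le ((ha.min hb).comp measurable_snd) measurable_fst).inter
    (measurableSet_le measurable_fst ((ha.max hb).comp measurable_snd))

theorem prod_volume_setOf_fst_mem_uIcc :
    (volume.prod μ) {p : ℝ × β | p.1 ∈ uIcc (a p.2) (b p.2)} =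
      ∫⁻ y, ENNReal.ofReal |b y - a y| ∂μ := by
  rw [Measure.prod_apply_symm (measurableSet_setOf_fst_mem_uIcc ha hb)]
  simp [Real.volume_interval]

theorem integrable_indicator_uIcc (h : Integrable (fun y => |b y - a y|) μ) :
    Integrable (fun p : ℝ × β => (uIcc (a p.2) (b p.2)).indicator (1 : ℝ → ℝ) p.1)
      (volume.prod μ) := by
  refine (integrable_indicator_iff (f := (1 : ℝ × β → ℝ))
    (measurableSet_setOf_fst_mem_uIcc ha hb)).mpr (integrableOn_const ?_)
  rw [prod_volume_setOf_fst_mem_uIcc ha hb]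
  exact ((hasFiniteIntegral_iff_ofReal (ae_of_all _ fun _ => abs_nonneg _)).mp h.2).ne

theorem integral_indicator_uIcc :
    ∫ p : ℝ × β, (uIcc (a p.2) (b p.2)).indicator (1 : ℝ → ℝ) p.1 ∂(volume.prod μ) =
      ∫ y, |b y - a y| ∂μ := by
  rw [integral_eq_lintegral_of_nonneg_ae (f := fun y => |b y - a y|)
      (ae_of_all _ fun _ => abs_nonneg _) (hb.sub ha).abs.aestronglyMeasurable,
    ← prod_volume_setOf_fst_mem_uIcc ha hb,
    ← measureReal_def, ← integral_indicator_one (measurableSet_setOf_fst_mem_uIcc ha hb)]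
  rfl

end Band

section Segment

variable {E : Type*} [AddCommGroup E] [Module ℝ E] (f : E →ₗ[ℝ] ℝ) {A B : E} {ρ : ℝ}

theorem subsingleton_segment_inter_preimage (hA : f A ≠ ρ) :
    (segment ℝ A B ∩ f ⁻¹' {ρ}).Subsingleton := by
  simp only [segment_eq_image', Set.Subsingleton, mem_inter_iff, mem_image, mem_preimage,
    mem_singleton_iff]
  rintro _ ⟨⟨s, -, rfl⟩, hs⟩ _ ⟨⟨t, -, rfl⟩, ht⟩
  simp only [map_add, map_smul, map_sub, smul_eq_mul] at hs ht
  have hAB : f B - f A ≠ 0 := fun h => hA (by simpa [h] using hs)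
  obtain rfl : s = t := mul_right_cancel₀ hAB (by linarith)
  rfl

theorem ncard_segment_inter_preimage (hA : f A ≠ ρ) :
    (segment ℝ A B ∩ f ⁻¹' {ρ}).ncard = (uIcc (f A) (f B)).indicator 1 ρ := by
  have himage : f '' (segment ℝ A B ∩ f ⁻¹' {ρ}) = uIcc (f A) (f B) ∩ {ρ} := by
    rw [image_inter_preimage, ← segment_eq_uIcc]
    exact congrArg (· ∩ {ρ}) (image_segment ℝ f.toAffineMap A B)
  rw [← ((subsingleton_segment_inter_preimage f hA).injOn f).ncard_image, himage]
  by_cases hρ : ρ ∈ uIcc (f A) (f B) <;> simp [hρ]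

end Segment

theorem Icc_div_subset_Icc_zero_one {n : ℕ} (i : Fin n) :
    Icc ((i : ℝ) / n) (((i : ℝ) + 1) / n) ⊆ Icc 0 1 := by
  have hn : (0 : ℝ) < n := by exact_mod_cast i.pos
  have hi : (i : ℝ) + 1 ≤ n := by exact_mod_cast i.isLt
  exact Icc_subset_Icc (by positivity) ((div_le_one hn).mpr hi)

theorem Icc_div_inter_Icc_div_subset {n i j : ℕ} (hij : i < j) :
    Icc ((i : ℝ) / n) (((i : ℝ) + 1) / n) ∩ Icc ((j : ℝ) / n) (((j : ℝ) + 1) / n) ⊆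
      {((i : ℝ) + 1) / n} := by
  rintro t ⟨⟨-, hti⟩, htj, -⟩
  have hij' : (i : ℝ) + 1 ≤ j := by exact_mod_cast hij
  exact le_antisymm hti (le_trans (by gcongr) htj)

theorem Icc_zero_one_eq_iUnion_Icc_div {n : ℕ} (hn : 0 < n) :
    Icc (0 : ℝ) 1 = ⋃ i : Fin n, Icc ((i : ℝ) / n) (((i : ℝ) + 1) / n) := by
  refine Subset.antisymm (fun t ht => ?_) (iUnion_subset Icc_div_subset_Icc_zero_one)
  have hn' : (0 : ℝ) < n := by exact_mod_cast hn
  have htn : 0 ≤ t * n := mul_nonneg ht.1 hn'.le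
  -- the piece containing `t` is the `⌊t n⌋`-th one, except at `t = 1`
  set k := min ⌊t * n⌋₊ (n - 1)
  have hk : k < n := lt_of_le_of_lt (min_le_right _ _) (Nat.sub_lt hn one_pos)
  refine mem_iUnion.mpr ⟨⟨k, hk⟩, ?_, ?_⟩
  · rw [div_le_iff₀ hn']
    exact le_trans (Nat.cast_le.mpr (min_le_left _ _)) (Nat.floor_le htn)
  · rw [le_div_iff₀ hn']
    rcases min_choice ⌊t * n⌋₊ (n - 1) with h | h <;> simp only [k, h]
    · exact (Nat.lt_floor_add_one _).le
    · rw [Nat.cast_sub hn, Nat.cast_one, sub_add_cancel]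
      nlinarith [ht.2]

def IsPolygonalPath {E : Type*} [AddCommGroup E] [Module ℝ E] {n : ℕ}
    (P : Fin (n + 1) → E) (γ : ℝ → E) : Prop :=
  ∀ i : Fin n, ∀ t ∈ Icc ((i : ℝ) / n) (((i : ℝ) + 1) / n),
    γ t = P i.castSucc + (((n : ℝ) * t - (i : ℝ)) • (P i.succ - P i.castSucc))

namespace IsPolygonalPath

variable {E : Type*} [AddCommGroup E] [Module ℝ E] {n : ℕ} {P : Fin (n + 1) → E}
  {γ : ℝ → E}

theorem image_Icc_div (hγ : IsPolygonalPath P γ) (i : Fin n) :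
    γ '' Icc ((i : ℝ) / n) (((i : ℝ) + 1) / n) = segment ℝ (P i.castSucc) (P i.succ) := by
  have hn : (0 : ℝ) < n := by exact_mod_cast i.pos
  have hreparam : (fun t : ℝ => (n : ℝ) * t + -i) '' Icc ((i : ℝ) / n) (((i : ℝ) + 1) / n) =
      Icc 0 1 := by
    rw [image_affine_Icc' hn]
    congr 1 <;> field_simp <;> ring
  rw [segment_eq_image', ← hreparam, image_image, image_congr fun t ht => hγ i t ht]
  simp only [sub_eq_add_neg]

theorem apply_succ_div (hγ : IsPolygonalPath P γ) (i : Fin n) :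
    γ (((i : ℝ) + 1) / n) = P i.succ := by
  have hn : (n : ℝ) ≠ 0 := by exact_mod_cast i.pos.ne'
  have hi : (i : ℝ) / n ≤ ((i : ℝ) + 1) / n := by gcongr; linarith
  rw [hγ i _ ⟨hi, le_rfl⟩, mul_div_cancel₀ _ hn, add_sub_cancel_left, one_smul,
    add_sub_cancel]

theorem image_Icc_zero_one (hγ : IsPolygonalPath P γ) (hn : 1 ≤ n) :
    γ '' Icc 0 1 = ⋃ i : Fin n, segment ℝ (P i.castSucc) (P i.succ) := by
  rw [Icc_zero_one_eq_iUnion_Icc_div hn, image_iUnion]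
  exact iUnion_congr hγ.image_Icc_div

theorem segment_inter_segment_subset (hγ : IsPolygonalPath P γ)
    (hinj : InjOn γ (Icc 0 1)) {i j : Fin n} (hij : i < j) :
    segment ℝ (P i.castSucc) (P i.succ) ∩ segment ℝ (P j.castSucc) (P j.succ) ⊆
      {P i.succ} := by
  rw [← hγ.image_Icc_div, ← hγ.image_Icc_div,
    ← hinj.image_inter (Icc_div_subset_Icc_zero_one i) (Icc_div_subset_Icc_zero_one j),
    ← hγ.apply_succ_div i, ← image_singleton]
  exact image_mono (Icc_div_inter_Icc_div_subset hij)

theorem ncard_image_inter_preimage (hγ : IsPolygonalPath P γ) (hn : 1 ≤ n)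
    (hinj : InjOn γ (Icc 0 1)) (f : E →ₗ[ℝ] ℝ) {ρ : ℝ} (hρ : ∀ k, f (P k) ≠ ρ) :
    (γ '' Icc 0 1 ∩ f ⁻¹' {ρ}).ncard =
      ∑ i : Fin n, (uIcc (f (P i.castSucc)) (f (P i.succ))).indicator 1 ρ := by
  have hdisj : Pairwise (Function.onFun Disjoint fun i : Fin n =>
      segment ℝ (P i.castSucc) (P i.succ) ∩ f ⁻¹' {ρ}) := by
    refine (pairwise_disjoint_on _).mpr fun i j hij => ?_
    rw [disjoint_iff_inter_eq_empty, inter_inter_inter_comm, inter_self]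
    refine eq_empty_of_subset_empty fun x ⟨hx, hxρ⟩ => hρ i.succ ?_
    rwa [hγ.segment_inter_segment_subset hinj hij hx] at hxρ
  rw [hγ.image_Icc_zero_one hn, iUnion_inter,
    ncard_iUnion_of_finite (fun _ => (subsingleton_segment_inter_preimage f (hρ _)).finite)
      hdisj,
    finsum_eq_sum_of_fintype]
  exact Finset.sum_congr rfl fun i _ => ncard_segment_inter_preimage f (hρ _)

end IsPolygonalPath

theorem IsPolygonalPath.ae_ncard_image_inter_paramLine {n : ℕ}
    {P : Fin (n + 1) → EuclideanSpace ℝ (Fin 2)} {γ : ℝ → EuclideanSpace ℝ (Fin 2)}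
    (hγ : IsPolygonalPath P γ) (hn : 1 ≤ n) (hinj : InjOn γ (Icc 0 1))
    (μ : Measure ℝ) [SFinite μ] :
    (fun p : ℝ × ℝ => ((γ '' Icc 0 1 ∩ paramLine p.1 p.2).ncard : ℝ)) =ᵐ[volume.prod μ]
      fun p => ∑ i : Fin n, (uIcc (lineCoord p.2 (P i.castSucc))
        (lineCoord p.2 (P i.succ))).indicator (1 : ℝ → ℝ) p.1 := by
  have hvertex : ∀ k, ∀ᵐ p ∂(volume.prod μ), p ∉ {p : ℝ × ℝ | p.1 = lineCoord p.2 (P k)} :=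
    fun k => measure_eq_zero_iff_ae_notMem.mp <|
      prod_volume_setOf_fst_eq_eq_zero (continuous_lineCoord_apply (P k)).measurable
  filter_upwards [ae_all_iff.mpr hvertex] with p hp
  rw [paramLine_eq_preimage, hγ.ncard_image_inter_preimage hn hinj _ fun k => Ne.symm (hp k),
    Nat.cast_sum]
  refine Finset.sum_congr rfl fun i _ => ?_
  by_cases h : p.1 ∈ uIcc (lineCoord p.2 (P i.castSucc)) (lineCoord p.2 (P i.succ)) <;> simp [h]

/-- Cauchy–Crofton formula for an injective piecewise-linear path: the number of
intersection points with the line `L(ρ,θ)` (an infinite intersection counting as `0`,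
via `Set.ncard`) is integrable in `(ρ,θ) ∈ ℝ × [0,π)`, and its integral equals twice
the length of the path. -/
theorem crofton_integral_polygonal
    (n : ℕ) (hn : 1 ≤ n) (P : Fin (n + 1) → EuclideanSpace ℝ (Fin 2))
    (γ : ℝ → EuclideanSpace ℝ (Fin 2))
    (hγ : ∀ i : Fin n, ∀ t ∈ Set.Icc ((i : ℝ) / n) (((i : ℝ) + 1) / n),
      γ t = P i.castSucc + (((n : ℝ) * t - (i : ℝ)) • (P i.succ - P i.castSucc)))
    (hinj : Set.InjOn γ (Set.Icc 0 1)) :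
    MeasureTheory.IntegrableOn
      (fun p : ℝ × ℝ => ((γ '' Set.Icc 0 1 ∩ paramLine p.1 p.2).ncard : ℝ))
      ((Set.univ : Set ℝ) ×ˢ Set.Ico 0 Real.pi) ∧
    ∫ p in (Set.univ : Set ℝ) ×ˢ Set.Ico 0 Real.pi,
        ((γ '' Set.Icc 0 1 ∩ paramLine p.1 p.2).ncard : ℝ)
      = 2 * ∑ i : Fin n, dist (P i.castSucc) (P i.succ) := by
  set μ := volume.restrict (Ico 0 π)
  have hμ : (volume : Measure (ℝ × ℝ)).restrict (univ ×ˢ Ico 0 π) =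
      (volume : Measure ℝ).prod μ := by
    rw [Measure.volume_eq_prod, ← Measure.prod_restrict, Measure.restrict_univ]
  have hmeas (q : EuclideanSpace ℝ (Fin 2)) := (continuous_lineCoord_apply q).measurable
  have hedge (i : Fin n) := integrable_indicator_uIcc (μ := μ) (hmeas (P i.castSucc))
    (hmeas (P i.succ)) (((continuous_lineCoord_apply _).sub
      (continuous_lineCoord_apply _)).abs.integrableOn_Icc.mono_set Ico_subset_Icc_self)
  have hae := IsPolygonalPath.ae_ncard_image_inter_paramLine hγ hn hinj μ
  rw [IntegrableOn, hμ]
  refine ⟨(integrable_finsetSum _ fun i _ => hedge i).congr hae.symm, ?_⟩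
  rw [integral_congr_ae hae, integral_finsetSum _ fun i _ => hedge i, Finset.mul_sum]
  refine Finset.sum_congr rfl fun i _ => ?_
  rw [integral_indicator_uIcc (hmeas _) (hmeas _), integral_abs_lineCoord_sub]
end
end

section
/- Let a₁, a₂ be real numbers with a₂ ≠ 2a₁. Let Γ(a₁,a₂) ⊆ ℝ² be the union of the two segments [(0,0),(1,a₁)] and [(1,a₁),(2,a₂)], with length ℓ = √(a₁² + 1) + √((a₂ − a₁)² + 1), and let δ be the one-dimensional Hausdorff measure of the topological frontier of the convex hull of Γ(a₁,a₂). Then the inconstancy ℐ(Γ(a₁,a₂)) := 2ℓ/δ equals 2 / (1 + √(a₂² + 4) / (√(a₁² + 1) + √((a₂ − a₁)² + 1))). -/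
/-!
The convex hull of `Γ(a₁,a₂)` is the triangle with vertices `(0,0)`, `(1,a₁)`, `(2,a₂)`, which is
nondegenerate exactly when `a₂ ≠ 2a₁`. Its frontier is the union of the three edges, any two of
which meet in a single vertex, so its `1`-dimensional Hausdorff measure is the perimeter
`ℓ + √(a₂²+4)`, and `2ℓ / (ℓ + √(a₂²+4))` is the claimed value.
-/

noncomputable section
open MeasureTheory Real Set
open scoped ENNReal

/-- The point `(x, y)` of the Euclidean plane. -/
def pt (x y : ℝ) : EuclideanSpace ℝ (Fin 2) := WithLp.toLp 2 ![x, y]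

/-- The two-segment curve `Γ(a₁,a₂)` joining `(0,0)` to `(1,a₁)` to `(2,a₂)`. -/
def twoSeg (a₁ a₂ : ℝ) : Set (EuclideanSpace ℝ (Fin 2)) :=
  segment ℝ (pt 0 0) (pt 1 a₁) ∪ segment ℝ (pt 1 a₁) (pt 2 a₂)

theorem measure_union_of_countable_inter {α : Type*} [MeasurableSpace α] {μ : Measure α}
    [NullSingletonClass μ] {s t : Set α} (ht : NullMeasurableSet t μ) (hst : (s ∩ t).Countable) :
    μ (s ∪ t) = μ s + μ t :=
  measure_union₀ ht (hst.measure_zero μ)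

theorem Fin.univ_eq_of_ne {i j k : Fin 3} (hij : i ≠ j) (hik : i ≠ k) (hjk : j ≠ k) :
    (Finset.univ : Finset (Fin 3)) = {i, j, k} := by
  revert i j k; decide

namespace AffineBasis

section Module

variable {V : Type*} [AddCommGroup V] [Module ℝ V] (b : AffineBasis (Fin 3) ℝ V)
  {i j k : Fin 3}

theorem coord_add_coord_add_coord (hij : i ≠ j) (hik : i ≠ k) (hjk : j ≠ k) (x : V) :
    b.coord i x + b.coord j x + b.coord k x = 1 := by
  simpa [Fin.univ_eq_of_ne hij hik hjk, hij, hik, hjk, add_assoc] using b.sum_coord_apply_eq_one x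

theorem coord_smul_add_coord_smul_add_coord_smul (hij : i ≠ j) (hik : i ≠ k) (hjk : j ≠ k)
    (x : V) : b.coord i x • b i + b.coord j x • b j + b.coord k x • b k = x := by
  simpa [Fin.univ_eq_of_ne hij hik hjk, hij, hik, hjk, add_assoc] using
    b.linear_combination_coord_eq_self x

theorem segment_eq_setOf_coord (hij : i ≠ j) (hik : i ≠ k) (hjk : j ≠ k) :
    segment ℝ (b i) (b j) = {x | (∀ m, 0 ≤ b.coord m x) ∧ b.coord k x = 0} := by
  ext x
  constructor
  · rintro ⟨u, v, hu, hv, huv, rfl⟩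
    have hcoord : ∀ m, b.coord m (u • b i + v • b j) =
        u * (if m = i then 1 else 0) + v * (if m = j then 1 else 0) := by
      intro m
      simp [Convex.combo_affine_apply huv, AffineBasis.coord_apply, eq_comm]
    refine ⟨fun m => ?_, ?_⟩
    · rw [hcoord m]; positivity
    · simp [hcoord k, hik.symm, hjk.symm]
  · rintro ⟨hpos, hk⟩
    refine ⟨b.coord i x, b.coord j x, hpos i, hpos j, ?_, ?_⟩
    · simpa [hk] using b.coord_add_coord_add_coord hij hik hjk x
    · simpa [hk] using b.coord_smul_add_coord_smul_add_coord_smul hij hik hjk x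

theorem segment_inter_segment_subset (hij : i ≠ j) (hik : i ≠ k) (hjk : j ≠ k) :
    segment ℝ (b i) (b j) ∩ segment ℝ (b j) (b k) ⊆ {b j} := by
  rw [b.segment_eq_setOf_coord hij hik hjk, b.segment_eq_setOf_coord hjk hij.symm hik.symm]
  rintro x ⟨⟨-, hk⟩, -, hi⟩
  have hj : b.coord j x = 1 := by simpa [hi, hk] using b.coord_add_coord_add_coord hij hik hjk x
  refine b.ext_elem fun m => ?_
  have hm := Finset.mem_univ m
  rw [Fin.univ_eq_of_ne hij hik hjk] at hm
  obtain rfl | rfl | rfl : m = i ∨ m = j ∨ m = k := by simpa using hm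
  · rw [hi, b.coord_apply_ne hij]
  · rw [hj, b.coord_apply_eq]
  · rw [hk, b.coord_apply_ne hjk.symm]

end Module

section Normed

variable {E : Type*} [NormedAddCommGroup E] [NormedSpace ℝ E] (b : AffineBasis (Fin 3) ℝ E)

theorem frontier_convexHull_fin_three :
    frontier (convexHull ℝ (range b)) =
      segment ℝ (b 0) (b 1) ∪ segment ℝ (b 1) (b 2) ∪ segment ℝ (b 0) (b 2) := by
  have : FiniteDimensional ℝ E := b.finiteDimensional
  rw [((finite_range b).isCompact_convexHull ℝ).isClosed.frontier_eq, b.interior_convexHull,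
    b.convexHull_eq_nonneg_coord, b.segment_eq_setOf_coord (k := 2) (by decide) (by decide)
      (by decide), b.segment_eq_setOf_coord (k := 0) (by decide) (by decide) (by decide),
    b.segment_eq_setOf_coord (k := 1) (by decide) (by decide) (by decide)]
  ext x
  simp only [mem_sdiff, mem_ofPred_eq, mem_union, not_forall, not_lt]
  constructor
  · rintro ⟨hpos, m, hm⟩
    have hm0 : b.coord m x = 0 := hm.antisymm (hpos m)
    fin_cases m
    exacts [Or.inl (Or.inr ⟨hpos, hm0⟩), Or.inr ⟨hpos, hm0⟩, Or.inl (Or.inl ⟨hpos, hm0⟩)]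
  · rintro ((⟨hpos, hz⟩ | ⟨hpos, hz⟩) | ⟨hpos, hz⟩)
    exacts [⟨hpos, 2, hz.le⟩, ⟨hpos, 0, hz.le⟩, ⟨hpos, 1, hz.le⟩]

theorem hausdorffMeasure_frontier_convexHull_fin_three [MeasurableSpace E] [BorelSpace E] :
    μH[1] (frontier (convexHull ℝ (range b))) =
      edist (b 0) (b 1) + edist (b 1) (b 2) + edist (b 0) (b 2) := by
  have : FiniteDimensional ℝ E := b.finiteDimensional
  have : NullSingletonClass (μH[1] : Measure E) := Measure.nullSingletonClass_hausdorff E one_pos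
  have hmeas (x y : E) : NullMeasurableSet (segment ℝ x y) μH[1] := by
    rw [← convexHull_pair]
    exact ((toFinite _).isCompact_convexHull ℝ).isClosed.measurableSet.nullMeasurableSet
  have h01_12 := b.segment_inter_segment_subset (i := 0) (j := 1) (k := 2)
    (by decide) (by decide) (by decide)
  have h10_02 := b.segment_inter_segment_subset (i := 1) (j := 0) (k := 2)
    (by decide) (by decide) (by decide)
  have h12_20 := b.segment_inter_segment_subset (i := 1) (j := 2) (k := 0)
    (by decide) (by decide) (by decide)
  rw [segment_symm ℝ (b 1) (b 0)] at h10_02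
  rw [segment_symm ℝ (b 2) (b 0)] at h12_20
  have hcount : ((segment ℝ (b 0) (b 1) ∪ segment ℝ (b 1) (b 2)) ∩
      segment ℝ (b 0) (b 2)).Countable := by
    refine ((finite_singleton (b 0)).union (finite_singleton (b 2))).countable.mono ?_
    rw [union_inter_distrib_right]
    exact union_subset_union h10_02 h12_20
  rw [frontier_convexHull_fin_three, measure_union_of_countable_inter (hmeas _ _) hcount,
    measure_union_of_countable_inter (hmeas _ _) ((countable_singleton _).mono h01_12),
    hausdorffMeasure_segment, hausdorffMeasure_segment, hausdorffMeasure_segment]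

end Normed

end AffineBasis

theorem hausdorffMeasure_frontier_convexHull_triangle {E : Type*} [NormedAddCommGroup E]
    [NormedSpace ℝ E] [FiniteDimensional ℝ E] [MeasurableSpace E] [BorelSpace E] {x y z : E}
    (hxyz : AffineIndependent ℝ ![x, y, z]) (hE : Module.finrank ℝ E = 2) :
    μH[1] (frontier (convexHull ℝ {x, y, z})) = edist x y + edist y z + edist x z := by
  let b : AffineBasis (Fin 3) ℝ E :=
    ⟨![x, y, z], hxyz, hxyz.affineSpan_eq_top_iff_card_eq_finrank_add_one.2 (by simp [hE])⟩
  have hb : range b = {x, y, z} := by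
    change range ![x, y, z] = _
    rw [Matrix.range_cons, Matrix.range_cons_cons_empty, singleton_union]
  rw [← hb]
  exact b.hausdorffMeasure_frontier_convexHull_fin_three

theorem convexHull_segment_union_segment {V : Type*} [AddCommGroup V] [Module ℝ V] (x y z : V) :
    convexHull ℝ (segment ℝ x y ∪ segment ℝ y z) = convexHull ℝ {x, y, z} := by
  refine (convexHull_min ?_ (convex_convexHull ℝ _)).antisymm (convexHull_mono ?_)
  · exact union_subset (segment_subset_convexHull (by simp) (by simp))
      (segment_subset_convexHull (by simp) (by simp))
  · rintro p (rfl | rfl | rfl)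
    exacts [Or.inl (left_mem_segment ℝ _ _), Or.inl (right_mem_segment ℝ _ _),
      Or.inr (right_mem_segment ℝ _ _)]

theorem dist_pt (x y x' y' : ℝ) :
    dist (pt x y) (pt x' y') = √((x - x') ^ 2 + (y - y') ^ 2) := by
  simp [EuclideanSpace.dist_eq, Fin.sum_univ_two, pt, Real.dist_eq, sq_abs]

theorem affineIndependent_pt {x₀ y₀ x₁ y₁ x₂ y₂ : ℝ}
    (h : (x₁ - x₀) * (y₂ - y₀) ≠ (x₂ - x₀) * (y₁ - y₀)) :
    AffineIndependent ℝ ![pt x₀ y₀, pt x₁ y₁, pt x₂ y₂] := by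
  rw [affineIndependent_iff_not_collinear_set, collinear_iff_of_mem (mem_insert _ _)]
  rintro ⟨v, hv⟩
  obtain ⟨r₁, h₁⟩ := hv (pt x₁ y₁) (by simp)
  obtain ⟨r₂, h₂⟩ := hv (pt x₂ y₂) (by simp)
  have hx₁ : x₁ = r₁ * v 0 + x₀ := congrArg (· 0) h₁
  have hy₁ : y₁ = r₁ * v 1 + y₀ := congrArg (· 1) h₁
  have hx₂ : x₂ = r₂ * v 0 + x₀ := congrArg (· 0) h₂
  have hy₂ : y₂ = r₂ * v 1 + y₀ := congrArg (· 1) h₂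
  exact h (by rw [hx₁, hy₁, hx₂, hy₂]; ring)

/-- If `a₂ ≠ 2a₁`, the inconstancy `ℐ(Γ(a₁,a₂)) = 2ℓ/δ` of the two-segment curve
`Γ(a₁,a₂)` — where `ℓ = √(a₁²+1) + √((a₂−a₁)²+1)` is its length and `δ` is the
one-dimensional Hausdorff measure of the frontier of its convex hull — equals
`2 / (1 + √(a₂²+4) / (√(a₁²+1) + √((a₂−a₁)²+1)))`. -/
theorem inconstancy_twoSeg (a₁ a₂ : ℝ) (h : a₂ ≠ 2 * a₁) :
    2 * (Real.sqrt (a₁ ^ 2 + 1) + Real.sqrt ((a₂ - a₁) ^ 2 + 1))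
        / (μH[1] (frontier (convexHull ℝ (twoSeg a₁ a₂)))).toReal
      = 2 / (1 + Real.sqrt (a₂ ^ 2 + 4)
          / (Real.sqrt (a₁ ^ 2 + 1) + Real.sqrt ((a₂ - a₁) ^ 2 + 1))) := by
  have hind : AffineIndependent ℝ ![pt 0 0, pt 1 a₁, pt 2 a₂] :=
    affineIndependent_pt (by contrapose! h; linarith)
  have hperim : (μH[1] (frontier (convexHull ℝ (twoSeg a₁ a₂)))).toReal =
      √(a₁ ^ 2 + 1) + √((a₂ - a₁) ^ 2 + 1) + √(a₂ ^ 2 + 4) := by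
    rw [twoSeg, convexHull_segment_union_segment,
      hausdorffMeasure_frontier_convexHull_triangle hind finrank_euclideanSpace_fin]
    simp only [edist_dist, dist_pt]
    rw [← ENNReal.ofReal_add (by positivity) (by positivity),
      ← ENNReal.ofReal_add (by positivity) (by positivity), ENNReal.toReal_ofReal (by positivity)]
    ring_nf
  have hℓ : 0 < √(a₁ ^ 2 + 1) + √((a₂ - a₁) ^ 2 + 1) := by positivity
  rw [hperim]
  field_simp
end
end

section
/- Let h > 0, N ≥ 2, and let u₀, u₁, …, u_N be real numbers each equal to 0 or h, with u₀ = 0 and u_N = h. Let α ≥ 1 be the least index with u_α = h, and let γ ≥ 0 be the greatest index with u_γ = 0. Let N₀₀, N_hh, N₀h, N_h0 be respectively the number of indices 0 ≤ i < N with (u_i, u_{i+1}) equal to (0,0), (h,h), (0,h), (h,0). Let Γ_N ⊆ ℝ² be the polygonal curve through (0,u₀), …, (N,u_N), with length ℓ(Γ_N) = Σ_{i<N} √(1 + (u_{i+1} − u_i)²), and let δ(Γ_N) be the one-dimensional Hausdorff measure of the frontier of the convex hull of Γ_N. Then the inconstancy ℐ(Γ_N) := 2ℓ(Γ_N)/δ(Γ_N)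 equals 2(N₀₀ + N_hh + √(1 + h²)(N₀h + N_h0)) / (√(h² + α²) + N − α + √(h² + (N − γ)²) + γ). -/
noncomputable section
open MeasureTheory Real Set Filter
open scoped ENNReal

/-- The polygonal curve `Γ_N` through `(0,u₀), (1,u₁), …, (N,u_N)`: the union of the
segments joining `(i, u_i)` to `(i+1, u_{i+1})` for `i = 0, …, N−1`. -/
def polyCurve (u : ℕ → ℝ) (N : ℕ) : Set (EuclideanSpace ℝ (Fin 2)) :=
  ⋃ i ∈ Finset.range N, segment ℝ (pt i (u i)) (pt (i + 1) (u (i + 1)))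

/-- The length `ℓ(Γ_N) = Σ_{i<N} √(1 + (u_{i+1} − u_i)²)` of the polygonal curve. -/
def polyLength (u : ℕ → ℝ) (N : ℕ) : ℝ :=
  ∑ i ∈ Finset.range N, Real.sqrt (1 + (u (i + 1) - u i) ^ 2)

/-- The perimeter `δ(Γ_N)` of the convex hull of the polygonal curve: the
one-dimensional Hausdorff measure of the frontier of the convex hull. -/
def polyDelta (u : ℕ → ℝ) (N : ℕ) : ℝ :=
  (μH[1] (frontier (convexHull ℝ (polyCurve u N)))).toReal

/-- The inconstancy `ℐ(Γ_N) := 2 ℓ(Γ_N) / δ(Γ_N)` of the polygonal curve. -/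
def polyIncon (u : ℕ → ℝ) (N : ℕ) : ℝ :=
  2 * polyLength u N / polyDelta u N

/-- The number of indices `0 ≤ i < N` with `u_i = j` and `u_{i+1} = j'`. -/
def blockCount (u : ℕ → ℝ) (N : ℕ) (j j' : ℝ) : ℕ :=
  ((Finset.range N).filter fun i => u i = j ∧ u (i + 1) = j').card

/-!
The convex hull of `Γ_N` is the trapezoid with corners `(0,0)`, `(γ,0)`, `(N,h)`, `(α,h)`: every
vertex `(i, u_i)` lies in it, because `u_i = 0` forces `i ≤ γ` and `u_i = h` forces `α ≤ i`, and
its four corners are vertices of `Γ_N`. The trapezoid is an intersection of four closed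
half-planes, so its interior is given by the strict inequalities and its frontier is the union of
its four sides. Since `N ≥ 2` the sides overlap only at corners, a set of zero `μH[1]`-measure, so
`δ(Γ_N)` is the sum of the side lengths. In `ℓ(Γ_N)` each flat step contributes `1` and each jump
contributes `√(1 + h²)`.
-/

local notation "ℝ²" => EuclideanSpace ℝ (Fin 2)

@[simp] lemma pt_apply_zero (x y : ℝ) : pt x y 0 = x := rfl

@[simp] lemma pt_apply_one (x y : ℝ) : pt x y 1 = y := rfl

lemma eq_pt_iff {p : ℝ²} {x y : ℝ} : p = pt x y ↔ p 0 = x ∧ p 1 = y := by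
  refine ⟨by rintro rfl; simp, fun ⟨h₀, h₁⟩ => ?_⟩
  ext i
  fin_cases i <;> simpa

lemma dist_pt_s11 (x₁ y₁ x₂ y₂ : ℝ) :
    dist (pt x₁ y₁) (pt x₂ y₂) = √((x₁ - x₂) ^ 2 + (y₁ - y₂) ^ 2) := by
  simp [EuclideanSpace.dist_eq, Fin.sum_univ_two, Real.dist_eq, sq_abs]

lemma lineMap_pt (x₁ y₁ x₂ y₂ t : ℝ) :
    AffineMap.lineMap (pt x₁ y₁) (pt x₂ y₂) t = pt (x₁ + t * (x₂ - x₁)) (y₁ + t * (y₂ - y₁)) := by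
  rw [AffineMap.lineMap_apply, eq_pt_iff]
  simp only [pt, vsub_eq_sub, vadd_eq_add, PiLp.add_apply, PiLp.smul_apply, PiLp.sub_apply,
    Matrix.cons_val_zero, Matrix.cons_val_one, Matrix.cons_val_fin_one, smul_eq_mul]
  constructor <;> ring

lemma mem_segment_pt_horizontal_iff {x₁ x₂ : ℝ} (hx : x₁ ≤ x₂) (y : ℝ) {p : ℝ²} :
    p ∈ segment ℝ (pt x₁ y) (pt x₂ y) ↔ p 1 = y ∧ x₁ ≤ p 0 ∧ p 0 ≤ x₂ := by
  have hmap : ∀ x, AffineMap.lineMap (pt 0 y) (pt 1 y) x = pt x y := fun x => by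
    simp [lineMap_pt]
  rw [← hmap x₁, ← hmap x₂, ← image_segment, segment_eq_Icc hx]
  simp only [hmap, mem_image, mem_Icc, eq_comm (b := p), eq_pt_iff]
  constructor
  · rintro ⟨x, hx, rfl, rfl⟩; exact ⟨rfl, hx⟩
  · rintro ⟨rfl, hx⟩; exact ⟨p 0, hx, rfl, rfl⟩

lemma mem_segment_pt_slanted_iff {h : ℝ} (hh : 0 < h) (x₁ x₂ : ℝ) {p : ℝ²} :
    p ∈ segment ℝ (pt x₁ 0) (pt x₂ h) ↔
      0 ≤ p 1 ∧ p 1 ≤ h ∧ h * p 0 = (h - p 1) * x₁ + p 1 * x₂ := by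
  set f := AffineMap.lineMap (k := ℝ) (pt x₁ 0) (pt (x₁ + (x₂ - x₁) / h) 1)
  have hf : ∀ y, f y = pt (x₁ + y * (x₂ - x₁) / h) y := fun y => by
    simp only [f, lineMap_pt]; congr 1 <;> ring
  have hfh : f h = pt x₂ h := by rw [hf]; congr 1; field_simp; ring
  rw [← hfh, show pt x₁ 0 = f 0 by simp [hf], ← image_segment, segment_eq_Icc hh.le]
  simp only [hf, mem_image, mem_Icc, eq_comm (b := p), eq_pt_iff]
  constructor
  · rintro ⟨y, hy, hx, rfl⟩
    refine ⟨hy.1, hy.2, ?_⟩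
    rw [hx]
    field_simp
    ring
  · rintro ⟨h₀, h₁, hx⟩
    refine ⟨p 1, ⟨h₀, h₁⟩, ?_, rfl⟩
    field_simp
    linarith

def halfPlane (s t c : ℝ) : Set ℝ² := {p | s * p 0 + t * p 1 ≤ c}

lemma isClosed_halfPlane (s t c : ℝ) : IsClosed (halfPlane s t c) :=
  isClosed_le (by fun_prop) continuous_const

lemma convex_halfPlane (s t c : ℝ) : Convex ℝ (halfPlane s t c) := by
  refine convex_halfSpace_le ⟨fun p q => ?_, fun r p => ?_⟩ c
  · simp only [PiLp.add_apply]; ring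
  · simp only [PiLp.smul_apply, smul_eq_mul]; ring

lemma interior_halfPlane {s t : ℝ} (hst : s ≠ 0 ∨ t ≠ 0) (c : ℝ) :
    interior (halfPlane s t c) = {p | s * p 0 + t * p 1 < c} := by
  let f : ℝ² →L[ℝ] ℝ := s • EuclideanSpace.proj 0 + t • EuclideanSpace.proj 1
  have hf : ∀ p, f p = s * p 0 + t * p 1 := fun p => by simp [f]
  have hsurj : Function.Surjective f := fun r => by
    rcases hst with hs | ht
    · exact ⟨pt (r / s) 0, by simp [hf, mul_div_cancel₀ r hs]⟩
    · exact ⟨pt 0 (r / t), by simp [hf, mul_div_cancel₀ r ht]⟩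
  have hpre : halfPlane s t c = f ⁻¹' Iic c := by ext p; simp [halfPlane, hf]
  rw [hpre, f.interior_preimage hsurj, interior_Iic]
  ext p; simp [hf]

/-- The trapezoid with corners `(a, 0)`, `(b, 0)`, `(c, h)`, `(d, h)` (when `a ≤ b`, `c ≤ d`,
`0 < h`), cut out by its four supporting half-planes. -/
def trapezoid (a b c d h : ℝ) : Set ℝ² :=
  {p | 0 ≤ p 1 ∧ p 1 ≤ h ∧ (h - p 1) * a + p 1 * c ≤ h * p 0 ∧ h * p 0 ≤ (h - p 1) * b + p 1 * d}

lemma trapezoid_eq_inter_halfPlane (a b c d h : ℝ) :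
    trapezoid a b c d h = halfPlane 0 (-1) 0 ∩ halfPlane 0 1 h ∩
      halfPlane (-h) (c - a) (-(h * a)) ∩ halfPlane h (b - d) (h * b) := by
  ext p
  simp only [trapezoid, halfPlane, mem_inter_iff, mem_ofPred_eq]
  constructor
  · rintro ⟨h₁, h₂, h₃, h₄⟩; refine ⟨⟨⟨?_, ?_⟩, ?_⟩, ?_⟩ <;> linarith
  · rintro ⟨⟨⟨h₁, h₂⟩, h₃⟩, h₄⟩; refine ⟨?_, ?_, ?_, ?_⟩ <;> linarith

lemma isClosed_trapezoid (a b c d h : ℝ) : IsClosed (trapezoid a b c d h) := by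
  rw [trapezoid_eq_inter_halfPlane]
  apply_rules [IsClosed.inter, isClosed_halfPlane]

lemma convex_trapezoid (a b c d h : ℝ) : Convex ℝ (trapezoid a b c d h) := by
  rw [trapezoid_eq_inter_halfPlane]
  apply_rules [Convex.inter, convex_halfPlane]

lemma interior_trapezoid {h : ℝ} (hh : 0 < h) (a b c d : ℝ) :
    interior (trapezoid a b c d h) = {p | 0 < p 1 ∧ p 1 < h ∧
      (h - p 1) * a + p 1 * c < h * p 0 ∧ h * p 0 < (h - p 1) * b + p 1 * d} := by
  simp only [trapezoid_eq_inter_halfPlane, interior_inter]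
  rw [interior_halfPlane (by norm_num), interior_halfPlane (by norm_num),
    interior_halfPlane (by simp [hh.ne']), interior_halfPlane (by simp [hh.ne'])]
  ext p
  simp only [mem_inter_iff, mem_ofPred_eq]
  constructor
  · rintro ⟨⟨⟨h₁, h₂⟩, h₃⟩, h₄⟩; refine ⟨?_, ?_, ?_, ?_⟩ <;> linarith
  · rintro ⟨h₁, h₂, h₃, h₄⟩; refine ⟨⟨⟨?_, ?_⟩, ?_⟩, ?_⟩ <;> linarith

lemma frontier_trapezoid {a b c d h : ℝ} (hh : 0 < h) (hab : a ≤ b) (hcd : c ≤ d) :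
    frontier (trapezoid a b c d h) =
      segment ℝ (pt a 0) (pt b 0) ∪ segment ℝ (pt c h) (pt d h) ∪
        segment ℝ (pt a 0) (pt c h) ∪ segment ℝ (pt b 0) (pt d h) := by
  ext p
  rw [(isClosed_trapezoid a b c d h).frontier_eq, interior_trapezoid hh]
  simp only [trapezoid, Set.mem_sdiff, mem_ofPred_eq, mem_union, mem_segment_pt_horizontal_iff hab,
    mem_segment_pt_horizontal_iff hcd, mem_segment_pt_slanted_iff hh]
  generalize p 0 = x, p 1 = y
  have hL : ∀ {y}, 0 ≤ y → y ≤ h → (h - y) * a + y * c ≤ (h - y) * b + y * d := fun hy₀ hy₁ => by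
    nlinarith [mul_le_mul_of_nonneg_left hab (sub_nonneg.2 hy₁), mul_le_mul_of_nonneg_left hcd hy₀]
  constructor
  · rintro ⟨⟨hy₀, hy₁, hxL, hxR⟩, hnot⟩
    simp only [not_and, not_lt] at hnot
    rcases hy₀.eq_or_lt with rfl | hy₀
    · left; left; left
      refine ⟨rfl, ?_, ?_⟩ <;> nlinarith
    rcases hy₁.eq_or_lt with rfl | hy₁
    · left; left; right
      refine ⟨rfl, ?_, ?_⟩ <;> nlinarith
    rcases hxL.eq_or_lt with hxL | hxL
    · left; right; exact ⟨hy₀.le, hy₁.le, hxL.symm⟩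
    · right; exact ⟨hy₀.le, hy₁.le, le_antisymm hxR (hnot hy₀ hy₁ hxL)⟩
  · rintro (((⟨rfl, hx₀, hx₁⟩ | ⟨rfl, hx₀, hx₁⟩) | ⟨hy₀, hy₁, hx⟩) | ⟨hy₀, hy₁, hx⟩)
    · refine ⟨⟨le_rfl, hh.le, ?_, ?_⟩, fun h => h.1.false⟩ <;> nlinarith
    · refine ⟨⟨hh.le, le_rfl, ?_, ?_⟩, fun h => h.2.1.false⟩ <;> nlinarith
    · exact ⟨⟨hy₀, hy₁, hx.ge, hx ▸ hL hy₀ hy₁⟩, fun h => h.2.2.1.ne hx.symm⟩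
    · exact ⟨⟨hy₀, hy₁, hx ▸ hL hy₀ hy₁, hx.le⟩, fun h => h.2.2.2.ne hx⟩

lemma trapezoid_subset_convexHull {a b c d h : ℝ} (hh : 0 < h) :
    trapezoid a b c d h ⊆ convexHull ℝ {pt a 0, pt b 0, pt c h, pt d h} := by
  rintro p ⟨hy₀, hy₁, hxL, hxR⟩
  have hconv := convex_convexHull ℝ ({pt a 0, pt b 0, pt c h, pt d h} : Set _)
  have hmem : ∀ q ∈ ({pt a 0, pt b 0, pt c h, pt d h} : Set _), q ∈ convexHull ℝ _ :=
    fun q hq => subset_convexHull ℝ _ hq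
  set xL := ((h - p 1) * a + p 1 * c) / h
  set xR := ((h - p 1) * b + p 1 * d) / h
  have hL : pt xL (p 1) ∈ segment ℝ (pt a 0) (pt c h) :=
    (mem_segment_pt_slanted_iff hh a c).2 ⟨hy₀, hy₁, mul_div_cancel₀ _ hh.ne'⟩
  have hR : pt xR (p 1) ∈ segment ℝ (pt b 0) (pt d h) :=
    (mem_segment_pt_slanted_iff hh b d).2 ⟨hy₀, hy₁, mul_div_cancel₀ _ hh.ne'⟩
  have hxL' : xL ≤ p 0 := by rw [div_le_iff₀' hh]; exact hxL
  have hxR' : p 0 ≤ xR := by rw [le_div_iff₀' hh]; exact hxR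
  have hp : p ∈ segment ℝ (pt xL (p 1)) (pt xR (p 1)) :=
    (mem_segment_pt_horizontal_iff (hxL'.trans hxR') _).2 ⟨rfl, hxL', hxR'⟩
  refine hconv.segment_subset ?_ ?_ hp
  · exact hconv.segment_subset (hmem _ (by simp)) (hmem _ (by simp)) hL
  · exact hconv.segment_subset (hmem _ (by simp)) (hmem _ (by simp)) hR

lemma eq_endpoint_of_mem_segment_pt_slanted {h x₁ x₂ : ℝ} (hh : 0 < h)
    {p : ℝ²} (hp : p ∈ segment ℝ (pt x₁ 0) (pt x₂ h)) :
    (p 1 = 0 → p = pt x₁ 0) ∧ (p 1 = h → p = pt x₂ h) := by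
  obtain ⟨-, -, hx⟩ := (mem_segment_pt_slanted_iff hh x₁ x₂).1 hp
  refine ⟨fun hy => eq_pt_iff.2 ⟨?_, hy⟩, fun hy => eq_pt_iff.2 ⟨?_, hy⟩⟩ <;>
    rw [hy] at hx <;> exact mul_left_cancel₀ hh.ne' (hx.trans (by ring))

lemma hausdorffMeasure_frontier_trapezoid {a b c d h : ℝ} (hh : 0 < h) (hab : a ≤ b)
    (hcd : c ≤ d) (hne : a < b ∨ c < d) :
    μH[1] (frontier (trapezoid a b c d h)) = edist (pt a 0) (pt b 0) + edist (pt c h) (pt d h) +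
      edist (pt a 0) (pt c h) + edist (pt b 0) (pt d h) := by
  set corners : Set ℝ² := {pt a 0, pt b 0, pt c h, pt d h}
  have hnull : μH[1] corners = 0 := by
    simpa using hausdorffMeasure_of_dimH_lt (d := 1) (s := corners)
      (by simp [(toFinite corners).countable.dimH_zero])
  have hdisj : ∀ {s t}, s ∩ t ⊆ corners → AEDisjoint μH[1] s t :=
    fun hst => measure_mono_null hst hnull
  have hmeas : ∀ x y : ℝ², NullMeasurableSet (segment ℝ x y) μH[1] := fun x y => by
    rw [← convexHull_pair]
    exact ((toFinite _).isCompact_convexHull ℝ).measurableSet.nullMeasurableSet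
  have hBT : AEDisjoint μH[1] (segment ℝ (pt a 0) (pt b 0)) (segment ℝ (pt c h) (pt d h)) :=
    hdisj fun p ⟨hp, hq⟩ => absurd (((mem_segment_pt_horizontal_iff hab _).1 hp).1.symm.trans
      ((mem_segment_pt_horizontal_iff hcd _).1 hq).1) hh.ne
  have hBL : AEDisjoint μH[1] (segment ℝ (pt a 0) (pt b 0)) (segment ℝ (pt a 0) (pt c h)) :=
    hdisj fun p ⟨hp, hq⟩ => by
      simp [corners, (eq_endpoint_of_mem_segment_pt_slanted hh hq).1
        ((mem_segment_pt_horizontal_iff hab _).1 hp).1]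
  have hBR : AEDisjoint μH[1] (segment ℝ (pt a 0) (pt b 0)) (segment ℝ (pt b 0) (pt d h)) :=
    hdisj fun p ⟨hp, hq⟩ => by
      simp [corners, (eq_endpoint_of_mem_segment_pt_slanted hh hq).1
        ((mem_segment_pt_horizontal_iff hab _).1 hp).1]
  have hTL : AEDisjoint μH[1] (segment ℝ (pt c h) (pt d h)) (segment ℝ (pt a 0) (pt c h)) :=
    hdisj fun p ⟨hp, hq⟩ => by
      simp [corners, (eq_endpoint_of_mem_segment_pt_slanted hh hq).2
        ((mem_segment_pt_horizontal_iff hcd _).1 hp).1]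
  have hTR : AEDisjoint μH[1] (segment ℝ (pt c h) (pt d h)) (segment ℝ (pt b 0) (pt d h)) :=
    hdisj fun p ⟨hp, hq⟩ => by
      simp [corners, (eq_endpoint_of_mem_segment_pt_slanted hh hq).2
        ((mem_segment_pt_horizontal_iff hcd _).1 hp).1]
  have hLR : AEDisjoint μH[1] (segment ℝ (pt a 0) (pt c h)) (segment ℝ (pt b 0) (pt d h)) := by
    refine hdisj fun p ⟨hp, hq⟩ => ?_
    obtain ⟨hy₀, hy₁, hxL⟩ := (mem_segment_pt_slanted_iff hh a c).1 hp
    obtain ⟨-, -, hxR⟩ := (mem_segment_pt_slanted_iff hh b d).1 hq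
    -- the two sides meet where `(h - y) (b - a) + y (d - c) = 0`, a sum of two nonnegative terms
    have h₁ := mul_nonneg (sub_nonneg.2 hy₁) (sub_nonneg.2 hab)
    have h₂ := mul_nonneg hy₀ (sub_nonneg.2 hcd)
    rcases hne with hne | hne
    · simp [corners, (eq_endpoint_of_mem_segment_pt_slanted hh hp).2 (by nlinarith)]
    · simp [corners, (eq_endpoint_of_mem_segment_pt_slanted hh hp).1 (by nlinarith)]
  rw [frontier_trapezoid hh hab hcd, measure_union₀ (hmeas _ _), measure_union₀ (hmeas _ _),
    measure_union₀ (hmeas _ _), hausdorffMeasure_segment, hausdorffMeasure_segment,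
    hausdorffMeasure_segment, hausdorffMeasure_segment]
  · exact hBT
  · exact hBL.union_left hTL
  · exact (hBR.union_left hTR).union_left hLR

lemma toReal_hausdorffMeasure_frontier_trapezoid {a b c d h : ℝ} (hh : 0 < h) (hab : a ≤ b)
    (hcd : c ≤ d) (hne : a < b ∨ c < d) :
    (μH[1] (frontier (trapezoid a b c d h))).toReal =
      b - a + (d - c) + √(h ^ 2 + (c - a) ^ 2) + √(h ^ 2 + (d - b) ^ 2) := by
  have hslant : ∀ x y : ℝ, √((x - y) ^ 2 + (0 - h) ^ 2) = √(h ^ 2 + (y - x) ^ 2) := fun x y => by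
    ring_nf
  rw [hausdorffMeasure_frontier_trapezoid hh hab hcd hne]
  simp only [edist_dist, dist_pt_s11, sub_self, ne_eq, OfNat.ofNat_ne_zero, not_false_eq_true,
    zero_pow, add_zero, Real.sqrt_sq_eq_abs, abs_sub_comm a, abs_sub_comm c,
    abs_of_nonneg (sub_nonneg.2 hab), abs_of_nonneg (sub_nonneg.2 hcd), hslant]
  rw [← ENNReal.ofReal_add (by linarith) (by linarith),
    ← ENNReal.ofReal_add (by linarith) (by positivity),
    ← ENNReal.ofReal_add (by positivity) (by positivity), ENNReal.toReal_ofReal (by positivity)]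

lemma pt_mem_polyCurve {u : ℕ → ℝ} {N i : ℕ} (hN : 0 < N) (hi : i ≤ N) :
    pt i (u i) ∈ polyCurve u N := by
  rcases hi.lt_or_eq with hi | rfl
  · exact mem_iUnion₂.2 ⟨i, Finset.mem_range.2 hi, left_mem_segment ℝ _ _⟩
  · obtain ⟨n, rfl⟩ := Nat.exists_eq_add_one_of_ne_zero hN.ne'
    refine mem_iUnion₂.2 ⟨n, Finset.mem_range.2 n.lt_succ_self, ?_⟩
    rw [Nat.cast_succ]
    exact right_mem_segment ℝ _ _

lemma polyCurve_subset {u : ℕ → ℝ} {N : ℕ} {S : Set ℝ²}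
    (hS : Convex ℝ S) (hu : ∀ i ≤ N, pt i (u i) ∈ S) : polyCurve u N ⊆ S :=
  iUnion₂_subset fun i hi => hS.segment_subset (hu i (Finset.mem_range.1 hi).le)
    (by simpa using hu (i + 1) (Finset.mem_range.1 hi))

lemma polyLength_eq_of_forall_eq_or_eq {u : ℕ → ℝ} {N : ℕ} {j k : ℝ} (hjk : j ≠ k)
    (hu : ∀ i ≤ N, u i = j ∨ u i = k) :
    polyLength u N = blockCount u N j j + blockCount u N k k +
      √(1 + (k - j) ^ 2) * (blockCount u N j k + blockCount u N k j) := by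
  have hterm : ∀ i ∈ Finset.range N, √(1 + (u (i + 1) - u i) ^ 2) =
      (if u i = j ∧ u (i + 1) = j then 1 else 0) + (if u i = k ∧ u (i + 1) = k then 1 else 0) +
      √(1 + (k - j) ^ 2) * ((if u i = j ∧ u (i + 1) = k then 1 else 0) +
        (if u i = k ∧ u (i + 1) = j then 1 else 0)) := by
    intro i hi
    have hi := Finset.mem_range.1 hi
    have hsq : (j - k) ^ 2 = (k - j) ^ 2 := by ring
    rcases hu i hi.le with hi₀ | hi₀ <;> rcases hu (i + 1) hi with hi₁ | hi₁ <;>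
      simp [hi₀, hi₁, hjk, hjk.symm, hsq]
  simp only [polyLength, blockCount, Finset.sum_congr rfl hterm, Finset.sum_add_distrib,
    ← Finset.mul_sum, Finset.sum_boole]

lemma convexHull_polyCurve_eq_trapezoid {h : ℝ} (hh : 0 < h) {N : ℕ} {u : ℕ → ℝ}
    (hvals : ∀ i ≤ N, u i = 0 ∨ u i = h) (hu0 : u 0 = 0) (huN : u N = h)
    {α : ℕ} (hαN : α ≤ N) (hαh : u α = h) (hαmin : ∀ i < α, u i = 0)
    {γ : ℕ} (hγN : γ ≤ N) (hγ0 : u γ = 0) (hγmax : ∀ i, γ < i → i ≤ N → u i = h) :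
    convexHull ℝ (polyCurve u N) = trapezoid 0 γ α N h := by
  have hN : 0 < N := Nat.pos_of_ne_zero fun hN => hh.ne (by rw [← huN, hN, hu0])
  have hvert : ∀ i ≤ N, pt i (u i) ∈ trapezoid 0 γ α N h := by
    intro i hi
    rcases hvals i hi with hui | hui
    · have hiγ : i ≤ γ := by
        by_contra! hγi
        exact hh.ne (hui ▸ hγmax i hγi hi)
      simp only [trapezoid, mem_ofPred_eq, hui, pt_apply_zero, pt_apply_one]
      refine ⟨le_rfl, hh.le, ?_, ?_⟩ <;> simp only [sub_zero, mul_zero, zero_mul, add_zero]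
      · positivity
      · exact mul_le_mul_of_nonneg_left (Nat.cast_le.2 hiγ) hh.le
    · have hαi : α ≤ i := by
        by_contra! hiα
        exact hh.ne' (hui ▸ hαmin i hiα)
      simp only [trapezoid, mem_ofPred_eq, hui, pt_apply_zero, pt_apply_one, sub_self, zero_mul,
        zero_add]
      refine ⟨hh.le, le_rfl, ?_, ?_⟩ <;> gcongr
  refine (convexHull_min (polyCurve_subset (convex_trapezoid ..) hvert)
    (convex_trapezoid ..)).antisymm ((trapezoid_subset_convexHull hh).trans (convexHull_mono ?_))
  simp only [insert_subset_iff, singleton_subset_iff]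
  refine ⟨?_, ?_, ?_, ?_⟩
  · simpa [hu0] using pt_mem_polyCurve (u := u) hN (Nat.zero_le N)
  · simpa [hγ0] using pt_mem_polyCurve (u := u) hN hγN
  · simpa [hαh] using pt_mem_polyCurve (u := u) hN hαN
  · simpa [huN] using pt_mem_polyCurve (u := u) hN le_rfl

theorem polyIncon_binary_finite_beta_zero_general
    (h : ℝ) (hh : 0 < h) (N : ℕ) (hN : 2 ≤ N) (u : ℕ → ℝ)
    (hvals : ∀ i ≤ N, u i = 0 ∨ u i = h) (hu0 : u 0 = 0) (huN : u N = h)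
    (α : ℕ) (hαN : α ≤ N) (hαh : u α = h) (hαmin : ∀ i < α, u i = 0)
    (γ : ℕ) (hγN : γ ≤ N) (hγ0 : u γ = 0) (hγmax : ∀ i, γ < i → i ≤ N → u i = h) :
    polyIncon u N =
      2 * ((blockCount u N 0 0 : ℝ) + (blockCount u N h h : ℝ)
            + Real.sqrt (1 + h ^ 2) * ((blockCount u N 0 h : ℝ) + (blockCount u N h 0 : ℝ)))
        / (Real.sqrt (h ^ 2 + (α : ℝ) ^ 2) + (N : ℝ) - (α : ℝ)
            + Real.sqrt (h ^ 2 + ((N : ℝ) - (γ : ℝ)) ^ 2) + (γ : ℝ)) := by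
  have hne : (0 : ℝ) < γ ∨ (α : ℝ) < N := by
    rcases Nat.eq_zero_or_pos γ with rfl | hγ
    · have hα : α ≤ 1 := by
        by_contra! hα
        exact hh.ne ((hαmin 1 hα).symm.trans (hγmax 1 one_pos (by omega)))
      exact Or.inr (by exact_mod_cast (by omega : α < N))
    · exact Or.inl (by exact_mod_cast hγ)
  have hδ : polyDelta u N = γ + (N - α) + √(h ^ 2 + α ^ 2) + √(h ^ 2 + (N - γ) ^ 2) := by
    rw [polyDelta, convexHull_polyCurve_eq_trapezoid hh hvals hu0 huN hαN hαh hαmin hγN hγ0 hγmax,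
      toReal_hausdorffMeasure_frontier_trapezoid hh (Nat.cast_nonneg γ) (Nat.cast_le.2 hαN) hne]
    simp
  rw [polyIncon, polyLength_eq_of_forall_eq_or_eq hh.ne hvals, hδ, sub_zero]
  ring

/-- Inconstancy of a finite `{0,h}`-valued sequence `u₀,…,u_N` with `u₀ = 0` and
`u_N = h`, in terms of the counts of length-2 blocks, the length `α` of the longest
initial string of `0`'s, and the greatest index `γ` with `u_γ = 0`. -/
theorem polyIncon_binary_finite_beta_zero
    (h : ℝ) (hh : 0 < h) (N : ℕ) (hN : 2 ≤ N) (u : ℕ → ℝ)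
    (hvals : ∀ i ≤ N, u i = 0 ∨ u i = h) (hu0 : u 0 = 0) (huN : u N = h)
    (α : ℕ) (hα1 : 1 ≤ α) (hαN : α ≤ N) (hαh : u α = h) (hαmin : ∀ i < α, u i = 0)
    (γ : ℕ) (hγN : γ ≤ N) (hγ0 : u γ = 0) (hγmax : ∀ i, γ < i → i ≤ N → u i = h) :
    polyIncon u N =
      2 * ((blockCount u N 0 0 : ℝ) + (blockCount u N h h : ℝ)
            + Real.sqrt (1 + h ^ 2) * ((blockCount u N 0 h : ℝ) + (blockCount u N h 0 : ℝ)))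
        / (Real.sqrt (h ^ 2 + (α : ℝ) ^ 2) + (N : ℝ) - (α : ℝ)
            + Real.sqrt (h ^ 2 + ((N : ℝ) - (γ : ℝ)) ^ 2) + (γ : ℝ)) :=
  polyIncon_binary_finite_beta_zero_general h hh N hN u hvals hu0 huN α hαN hαh hαmin γ hγN hγ0
    hγmax
end
end
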